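/- arXiv:2603.04332 — 2 statements merged into one kernel-verified Lean document; each statement's English description precedes it below -/
import Mathlib

section
/- The difference between the two orderings of operational correlations is bounded by the sum of invasivenesses: |⟨A→B⟩_ρ^op − ⟨B→A⟩_ρ^op| ≤ ‖A∘_α B‖ · (‖Λ_A(ρ) − ρ‖₁ + ‖Λ_B(ρ) − ρ‖₁) for any α ∈ ℝ. -/
open Matrix Complex
open scoped ComplexOrder

noncomputable def opNorm {m : Type*} [Fintype m] [DecidableEq m] (X : Matrix m m ℂ) : ℝ :=
  ‖Matrix.toEuclideanCLM (𝕜 := ℂ) X‖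

noncomputable def trNorm {m : Type*} [Fintype m] [DecidableEq m] (X : Matrix m m ℂ) : ℝ :=
  (((Matrix.posSemidef_conjTranspose_mul_self X).1.eigenvectorUnitary.1 *
    diagonal (((↑) : ℝ → ℂ) ∘ (√·) ∘ (Matrix.posSemidef_conjTranspose_mul_self X).1.eigenvalues) *
    (star (Matrix.posSemidef_conjTranspose_mul_self X).1.eigenvectorUnitary : Matrix m m ℂ)).trace).re

/-! The pinched state `Λ_A(ρ) = ∑ P_a ρ P_a` commutes with `A`, so `tr[Λ_A(ρ) (A ∘_α B)]` only
sees `A B` and equals `⟨A→B⟩`; symmetrically `tr[Λ_B(ρ) (A ∘_α B)] = ⟨B→A⟩`. Subtracting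
`tr[ρ (A ∘_α B)]` from both, the difference of the two orderings is
`tr[(Λ_A(ρ) − ρ) C] − tr[(Λ_B(ρ) − ρ) C]` with `C = A ∘_α B`, and each term is bounded by the
Hölder inequality `|tr[X C]| ≤ ‖C‖ ‖X‖₁` for Hermitian `X`, read off in an eigenbasis of `X`. -/

def pinching {ι R : Type*} [Fintype ι] [NonUnitalNonAssocSemiring R] (p : ι → R) (x : R) : R :=
  ∑ i, p i * x * p i

lemma IsSelfAdjoint.pinching_sub {ι R : Type*} [Fintype ι] [Ring R] [StarRing R]
    {p : ι → R} (hp : ∀ i, IsSelfAdjoint (p i)) {x : R} (hx : IsSelfAdjoint x) :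
    IsSelfAdjoint (pinching p x - x) := by
  refine (isSelfAdjoint_sum _ fun i _ => ?_).sub hx
  simpa only [(hp i).star_eq] using hx.conjugate (p i)

namespace OrthogonalIdempotents

variable {ι R S : Type*} [Fintype ι] [CommSemiring R] [Semiring S] [Algebra R S] {e : ι → S}

lemma mul_sum_smul (he : OrthogonalIdempotents e) (c : ι → R) (i : ι) :
    e i * ∑ j, c j • e j = c i • e i := by
  rw [Finset.mul_sum, Finset.sum_eq_single i
    (fun j _ hj => by rw [mul_smul_comm, he.ortho hj.symm, smul_zero]) (by simp),
    mul_smul_comm, (he.idem i).eq]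

lemma sum_smul_mul (he : OrthogonalIdempotents e) (c : ι → R) (i : ι) :
    (∑ j, c j • e j) * e i = c i • e i := by
  rw [Finset.sum_mul, Finset.sum_eq_single i
    (fun j _ hj => by rw [smul_mul_assoc, he.ortho hj, smul_zero]) (by simp),
    smul_mul_assoc, (he.idem i).eq]

lemma pinching_mul_sum_smul (he : OrthogonalIdempotents e) (c : ι → R) (x : S) :
    pinching e x * ∑ j, c j • e j = ∑ i, c i • (e i * x * e i) := by
  simp only [pinching, Finset.sum_mul, mul_assoc, he.mul_sum_smul, mul_smul_comm]

lemma commute_pinching (he : OrthogonalIdempotents e) (c : ι → R) (x : S) :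
    Commute (∑ j, c j • e j) (pinching e x) := by
  refine Commute.sum_right _ _ _ fun i _ => ?_
  rw [Commute, SemiconjBy, ← mul_assoc, ← mul_assoc, he.sum_smul_mul, mul_assoc, mul_assoc,
    he.mul_sum_smul]
  simp only [smul_mul_assoc, mul_smul_comm, mul_assoc]

lemma trace_pinching_mul_mul_eq_sum {n κ : Type*} [Fintype n] [DecidableEq n] [Fintype κ]
    {P : ι → Matrix n n R} (hP : OrthogonalIdempotents P) (x : Matrix n n R)
    (a : ι → R) (b : κ → R) (Q : κ → Matrix n n R) :
    (pinching P x * (∑ i, a i • P i) * ∑ j, b j • Q j).trace =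
      ∑ i, ∑ j, a i * b j * (P i * x * P i * Q j).trace := by
  rw [hP.pinching_mul_sum_smul, Finset.sum_mul, Matrix.trace_sum]
  refine Finset.sum_congr rfl fun i _ => ?_
  simp only [smul_mul_assoc, Finset.mul_sum, mul_smul_comm, Matrix.trace_sum, Matrix.trace_smul,
    smul_eq_mul, mul_assoc]
  exact Finset.sum_congr rfl fun j _ => mul_left_comm _ _ _

end OrthogonalIdempotents

namespace Matrix

variable {n R : Type*} [Fintype n] [CommSemiring R]

lemma trace_mul_smul_add_smul_of_commute_left {X A : Matrix n n R} (h : Commute X A)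
    (B : Matrix n n R) {α β : R} (hαβ : α + β = 1) :
    (X * (α • (A * B) + β • (B * A))).trace = (X * A * B).trace := by
  have hBA : (X * (B * A)).trace = (X * A * B).trace := by
    rw [← mul_assoc, trace_mul_cycle, ← h.eq]
  rw [mul_add, mul_smul_comm, mul_smul_comm, trace_add, trace_smul, trace_smul, hBA,
    ← mul_assoc, ← add_smul, hαβ, one_smul]

lemma trace_mul_smul_add_smul_of_commute_right {X B : Matrix n n R} (h : Commute X B)
    (A : Matrix n n R) {α β : R} (hαβ : α + β = 1) :
    (X * (α • (A * B) + β • (B * A))).trace = (X * B * A).trace := by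
  rw [add_comm, trace_mul_smul_add_smul_of_commute_left h A (by rwa [add_comm])]

end Matrix

lemma ContinuousLinearMap.norm_inner_apply_self_le {𝕜 E : Type*} [RCLike 𝕜]
    [NormedAddCommGroup E] [InnerProductSpace 𝕜 E] (T : E →L[𝕜] E) (v : E) :
    ‖inner 𝕜 v (T v)‖ ≤ ‖T‖ * ‖v‖ ^ 2 :=
  calc ‖inner 𝕜 v (T v)‖ ≤ ‖v‖ * ‖T v‖ := norm_inner_le_norm v (T v)
    _ ≤ ‖v‖ * (‖T‖ * ‖v‖) := by gcongr; exact T.le_opNorm v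
    _ = ‖T‖ * ‖v‖ ^ 2 := by ring

namespace Matrix

variable {n 𝕜 : Type*} [Fintype n] [DecidableEq n] [RCLike 𝕜]

lemma IsHermitian.trace_cfc {A : Matrix n n 𝕜} (hA : A.IsHermitian) (f : ℝ → ℝ) :
    (cfc f A).trace = ∑ i, (f (hA.eigenvalues i) : 𝕜) := by
  rw [hA.cfc_eq, IsHermitian.cfc, Unitary.conjStarAlgAut_apply, trace_mul_cycle,
    Unitary.coe_star_mul_self, one_mul, trace_diagonal]
  rfl

lemma trace_eq_sum_inner_toEuclideanLin (M : Matrix n n 𝕜)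
    (b : OrthonormalBasis n 𝕜 (EuclideanSpace 𝕜 n)) :
    M.trace = ∑ i, inner 𝕜 (b i) (toEuclideanLin M (b i)) := by
  rw [← LinearMap.trace_eq_sum_inner, toEuclideanLin, toLpLin_eq_toLin, trace_toLin_eq]

lemma IsHermitian.trace_mul_eq_sum_eigenvalues_mul_inner {X : Matrix n n 𝕜}
    (hX : X.IsHermitian) (C : Matrix n n 𝕜) :
    (X * C).trace = ∑ i, (hX.eigenvalues i : 𝕜) *
      inner 𝕜 (hX.eigenvectorBasis i) (toEuclideanCLM (𝕜 := 𝕜) C (hX.eigenvectorBasis i)) := by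
  rw [trace_mul_comm, trace_eq_sum_inner_toEuclideanLin _ hX.eigenvectorBasis]
  refine Finset.sum_congr rfl fun i _ => ?_
  have hv : toEuclideanLin X (hX.eigenvectorBasis i) =
      (hX.eigenvalues i : 𝕜) • hX.eigenvectorBasis i := by
    ext1
    rw [ofLp_toLpLin, toLin'_apply, hX.mulVec_eigenvectorBasis i, WithLp.ofLp_smul,
      RCLike.real_smul_eq_coe_smul (K := 𝕜)]
  rw [toEuclideanLin, toLpLin_mul_same, LinearMap.comp_apply, ← toEuclideanLin, hv, map_smul,
    inner_smul_right]
  rfl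

end Matrix

section

variable {n : Type*} [Fintype n] [DecidableEq n]

lemma trNorm_eq_re_trace_cfc_sqrt (X : Matrix n n ℂ) :
    trNorm X = (cfc Real.sqrt (Xᴴ * X)).trace.re := by
  rw [(posSemidef_conjTranspose_mul_self X).1.cfc_eq]
  rfl

lemma Matrix.IsHermitian.trNorm_eq_sum_abs_eigenvalues {X : Matrix n n ℂ} (hX : X.IsHermitian) :
    trNorm X = ∑ i, |hX.eigenvalues i| := by
  have hsq : Xᴴ * X = cfc (· ^ 2 : ℝ → ℝ) X := by
    rw [cfc_pow_id X 2 hX.isSelfAdjoint, hX.eq, sq]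
  rw [trNorm_eq_re_trace_cfc_sqrt, hsq, ← cfc_comp Real.sqrt (· ^ 2) X hX.isSelfAdjoint]
  simp only [Function.comp_def, Real.sqrt_sq_eq_abs, hX.trace_cfc]
  simp

lemma norm_trace_mul_le_opNorm_mul_trNorm {X : Matrix n n ℂ} (hX : X.IsHermitian)
    (C : Matrix n n ℂ) : ‖(X * C).trace‖ ≤ opNorm C * trNorm X := by
  have hdiag (i : n) : ‖inner ℂ (hX.eigenvectorBasis i)
      (toEuclideanCLM (𝕜 := ℂ) C (hX.eigenvectorBasis i))‖ ≤ opNorm C := by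
    simpa [opNorm, hX.eigenvectorBasis.orthonormal.1 i] using
      (toEuclideanCLM (𝕜 := ℂ) C).norm_inner_apply_self_le (hX.eigenvectorBasis i)
  rw [hX.trace_mul_eq_sum_eigenvalues_mul_inner, hX.trNorm_eq_sum_abs_eigenvalues, Finset.mul_sum]
  refine (norm_sum_le _ _).trans (Finset.sum_le_sum fun i _ => ?_)
  rw [norm_mul, RCLike.norm_ofReal, mul_comm]
  exact mul_le_mul_of_nonneg_right (hdiag i) (abs_nonneg _)

end

theorem two_orderings_diff_le_sum_invasiveness_general
    {m ι κ : Type*} [Fintype m] [DecidableEq m] [Fintype ι] [Fintype κ]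
    (A B ρ : Matrix m m ℂ) (α : ℝ)
    (a : ι → ℝ) (P : ι → Matrix m m ℂ)
    (b : κ → ℝ) (Q : κ → Matrix m m ℂ)
    (hP_herm : ∀ i, (P i).IsHermitian) (hP_idem : ∀ i, P i * P i = P i)
    (hP_orth : ∀ i j, i ≠ j → P i * P j = 0)
    (hA : A = ∑ i, (a i : ℂ) • P i)
    (hQ_herm : ∀ j, (Q j).IsHermitian) (hQ_idem : ∀ j, Q j * Q j = Q j)
    (hQ_orth : ∀ j k, j ≠ k → Q j * Q k = 0)
    (hB : B = ∑ j, (b j : ℂ) • Q j)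
    (hρ : ρ.PosSemidef) :
    ‖(∑ i, ∑ j, ((a i : ℂ) * (b j : ℂ)) * (P i * ρ * P i * Q j).trace)
        - (∑ i, ∑ j, ((a i : ℂ) * (b j : ℂ)) * (Q j * ρ * Q j * P i).trace)‖
      ≤ opNorm ((α : ℂ) • (A * B) + ((1 - α : ℝ) : ℂ) • (B * A))
          * (trNorm ((∑ i, P i * ρ * P i) - ρ) + trNorm ((∑ j, Q j * ρ * Q j) - ρ)) := by
  have hP : OrthogonalIdempotents P := ⟨hP_idem, fun i j => hP_orth i j⟩
  have hQ : OrthogonalIdempotents Q := ⟨hQ_idem, fun j k => hQ_orth j k⟩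
  have hα : (α : ℂ) + ((1 - α : ℝ) : ℂ) = 1 := by push_cast; ring
  set C := (α : ℂ) • (A * B) + ((1 - α : ℝ) : ℂ) • (B * A)
  have hdiff : (∑ i, ∑ j, ((a i : ℂ) * (b j : ℂ)) * (P i * ρ * P i * Q j).trace)
        - (∑ i, ∑ j, ((a i : ℂ) * (b j : ℂ)) * (Q j * ρ * Q j * P i).trace) =
      ((pinching P ρ - ρ) * C).trace - ((pinching Q ρ - ρ) * C).trace := by
    rw [sub_mul, sub_mul, trace_sub, trace_sub, sub_sub_sub_cancel_right,
      trace_mul_smul_add_smul_of_commute_left (hA ▸ hP.commute_pinching _ ρ).symm _ hα,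
      trace_mul_smul_add_smul_of_commute_right (hB ▸ hQ.commute_pinching _ ρ).symm _ hα,
      hA, hB, hP.trace_pinching_mul_mul_eq_sum, hQ.trace_pinching_mul_mul_eq_sum]
    congr 1
    rw [Finset.sum_comm]
    simp only [mul_comm (b _ : ℂ)]
  have hPρ := IsSelfAdjoint.pinching_sub hP_herm hρ.1
  have hQρ := IsSelfAdjoint.pinching_sub hQ_herm hρ.1
  calc _ = ‖((pinching P ρ - ρ) * C).trace - ((pinching Q ρ - ρ) * C).trace‖ := by rw [hdiff]
    _ ≤ ‖((pinching P ρ - ρ) * C).trace‖ + ‖((pinching Q ρ - ρ) * C).trace‖ := norm_sub_le _ _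
    _ ≤ opNorm C * trNorm (pinching P ρ - ρ) + opNorm C * trNorm (pinching Q ρ - ρ) :=
      add_le_add (norm_trace_mul_le_opNorm_mul_trNorm hPρ C)
        (norm_trace_mul_le_opNorm_mul_trNorm hQρ C)
    _ = _ := (mul_add _ _ _).symm

/-- The difference between the two orderings of operational correlations is bounded by
`‖A∘_α B‖ (‖Λ_A(ρ) − ρ‖₁ + ‖Λ_B(ρ) − ρ‖₁)` for any real `α`. -/
theorem two_orderings_diff_le_sum_invasiveness
    {m ι κ : Type*} [Fintype m] [DecidableEq m] [Fintype ι] [Fintype κ]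
    (A B ρ : Matrix m m ℂ) (α : ℝ)
    (a : ι → ℝ) (P : ι → Matrix m m ℂ)
    (b : κ → ℝ) (Q : κ → Matrix m m ℂ)
    (hP_herm : ∀ i, (P i).IsHermitian) (hP_idem : ∀ i, P i * P i = P i)
    (hP_orth : ∀ i j, i ≠ j → P i * P j = 0) (hP_sum : ∑ i, P i = 1)
    (hA : A = ∑ i, (a i : ℂ) • P i)
    (hQ_herm : ∀ j, (Q j).IsHermitian) (hQ_idem : ∀ j, Q j * Q j = Q j)
    (hQ_orth : ∀ j k, j ≠ k → Q j * Q k = 0) (hQ_sum : ∑ j, Q j = 1)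
    (hB : B = ∑ j, (b j : ℂ) • Q j)
    (hρ : ρ.PosSemidef) (hρtr : ρ.trace = 1) :
    ‖(∑ i, ∑ j, ((a i : ℂ) * (b j : ℂ)) * (P i * ρ * P i * Q j).trace)
        - (∑ i, ∑ j, ((a i : ℂ) * (b j : ℂ)) * (Q j * ρ * Q j * P i).trace)‖
      ≤ opNorm ((α : ℂ) • (A * B) + ((1 - α : ℝ) : ℂ) • (B * A))
          * (trNorm ((∑ i, P i * ρ * P i) - ρ) + trNorm ((∑ j, Q j * ρ * Q j) - ρ)) :=
  two_orderings_diff_le_sum_invasiveness_general A B ρ α a P b Q hP_herm hP_idem hP_orth hA hQ_herm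
    hQ_idem hQ_orth hB hρ
end

section
/- For the qubit observables A = σ_z and B = σ_θ = cos θ σ_z + sin θ σ_x, the maximum disturbance of B-observables by the Lüders measurement of A satisfies sup_{(β₀,β₁)≠0, β₀,β₁∈ℂ} |tr[(Λ_A(ρ)−ρ)(β₀I + β₁σ_θ)]| / ‖β₀I + β₁σ_θ‖ = |sin θ · ⟨σ_x⟩_ρ|. -/
/-!
The Lüders map of `σ_z` erases the off-diagonal entries of `ρ`, so the trace of
`(Λ_A(ρ) - ρ)(β₀ I + β₁ σ_θ)` is `-β₁ sin θ ⟨σ_x⟩_ρ`, where `⟨σ_x⟩_ρ` is real since `ρ` and `σ_x`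
are Hermitian. Because `σ_θ` is an involution different from `±I`, the operator
`β₀ I + β₁ σ_θ` has eigenvalues `β₀ ± β₁`, so its norm is at least `|β₁|`; this bounds every
ratio by `|sin θ ⟨σ_x⟩_ρ|`, and `β₀ = 0, β₁ = 1` attains the bound as `σ_θ` is unitary.
-/

open Matrix Complex
open scoped ComplexOrder

noncomputable def σx : Matrix (Fin 2) (Fin 2) ℂ := !![0, 1; 1, 0]
noncomputable def σz : Matrix (Fin 2) (Fin 2) ℂ := !![1, 0; 0, -1]

noncomputable def σθ (θ : ℝ) : Matrix (Fin 2) (Fin 2) ℂ :=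
  (Real.cos θ : ℂ) • σz + (Real.sin θ : ℂ) • σx

noncomputable def Pz (s : ℝ) : Matrix (Fin 2) (Fin 2) ℂ := (2 : ℂ)⁻¹ • (1 + (s : ℂ) • σz)

open scoped Matrix.Norms.L2Operator

lemma opNorm_eq_norm {n : Type*} [Fintype n] [DecidableEq n] (X : Matrix n n ℂ) :
    opNorm X = ‖X‖ := rfl

section NormedAlgebra

variable {𝕜 A : Type*} [RCLike 𝕜] [NormedRing A] [NormedAlgebra 𝕜 A]

lemma norm_le_norm_of_mul_eq_smul {T P : A} {μ : 𝕜} (h : T * P = μ • P) (hP : P ≠ 0) :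
    ‖μ‖ ≤ ‖T‖ := by
  have : ‖μ‖ * ‖P‖ ≤ ‖T‖ * ‖P‖ := by
    rw [← norm_smul, ← h]
    exact norm_mul_le T P
  exact le_of_mul_le_mul_right this (norm_pos_iff.2 hP)

-- `1 + U` and `1 - U` are eigen-elements of `β₀ • 1 + β₁ • U` for the eigenvalues `β₀ ± β₁`.
lemma norm_le_norm_smul_one_add_smul {U : A} (hU : U * U = 1) (hp : 1 + U ≠ 0)
    (hm : 1 - U ≠ 0) (β₀ β₁ : 𝕜) : ‖β₁‖ ≤ ‖β₀ • (1 : A) + β₁ • U‖ := by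
  have hplus : (β₀ • 1 + β₁ • U) * (1 + U) = (β₀ + β₁) • (1 + U) := by
    simp only [add_mul, mul_add, smul_mul_assoc, one_mul, mul_one, hU, smul_add, add_smul]
    abel
  have hminus : (β₀ • 1 + β₁ • U) * (1 - U) = (β₀ - β₁) • (1 - U) := by
    simp only [add_mul, mul_sub, smul_mul_assoc, one_mul, mul_one, hU, smul_sub, sub_smul]
    abel
  have h₁ := norm_le_norm_of_mul_eq_smul hplus hp
  have h₂ := norm_le_norm_of_mul_eq_smul hminus hm
  have : 2 * ‖β₁‖ ≤ ‖β₀ + β₁‖ + ‖β₀ - β₁‖ := by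
    calc 2 * ‖β₁‖ = ‖(β₀ + β₁) - (β₀ - β₁)‖ := by
          rw [add_sub_sub_cancel, ← two_mul, norm_mul, RCLike.norm_two]
      _ ≤ _ := norm_sub_le _ _
  linarith

end NormedAlgebra

lemma Matrix.IsHermitian.im_trace_mul {n : Type*} [Fintype n] {A B : Matrix n n ℂ}
    (hA : A.IsHermitian) (hB : B.IsHermitian) : (A * B).trace.im = 0 := by
  rw [← Complex.conj_eq_iff_im]
  change star (A * B).trace = _
  rw [← trace_conjTranspose, conjTranspose_mul, hA.eq, hB.eq, trace_mul_comm]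

lemma isHermitian_σx : σx.IsHermitian := by
  ext i j
  fin_cases i <;> fin_cases j <;> simp [σx]

lemma isHermitian_σθ (θ : ℝ) : (σθ θ).IsHermitian := by
  ext i j
  fin_cases i <;> fin_cases j <;> simp [σθ, σx, σz, -Complex.ofReal_cos, -Complex.ofReal_sin]

lemma σθ_mul_self (θ : ℝ) : σθ θ * σθ θ = 1 := by
  ext i j
  fin_cases i <;> fin_cases j <;>
    simp [σθ, σx, σz, Matrix.mul_apply, Fin.sum_univ_two, ← sq, mul_comm]

lemma trace_σθ (θ : ℝ) : (σθ θ).trace = 0 := by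
  simp [σθ, σx, σz, Matrix.trace, Fin.sum_univ_two]

lemma σθ_mem_unitary (θ : ℝ) : σθ θ ∈ unitary (Matrix (Fin 2) (Fin 2) ℂ) := by
  rw [Unitary.mem_iff, star_eq_conjTranspose, (isHermitian_σθ θ).eq, and_self]
  exact σθ_mul_self θ

lemma norm_σθ (θ : ℝ) : ‖σθ θ‖ = 1 := CStarRing.norm_of_mem_unitary (σθ_mem_unitary θ)

lemma one_add_σθ_ne_zero (θ : ℝ) : 1 + σθ θ ≠ 0 := by
  intro h
  simpa [trace_add, trace_σθ] using congrArg trace h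

lemma one_sub_σθ_ne_zero (θ : ℝ) : 1 - σθ θ ≠ 0 := by
  intro h
  simpa [trace_sub, trace_σθ] using congrArg trace h

lemma trace_luders_σz_sub_mul (θ : ℝ) (ρ : Matrix (Fin 2) (Fin 2) ℂ) (β₀ β₁ : ℂ) :
    (((Pz 1 * ρ * Pz 1 + Pz (-1) * ρ * Pz (-1)) - ρ)
        * (β₀ • (1 : Matrix (Fin 2) (Fin 2) ℂ) + β₁ • σθ θ)).trace
      = -(β₁ * Real.sin θ * (ρ * σx).trace) := by
  simp [Pz, σθ, σx, σz, Matrix.trace, Matrix.mul_apply, Fin.sum_univ_two, Matrix.one_apply]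
  ring

theorem qubit_max_disturbance_general (θ : ℝ) (ρ : Matrix (Fin 2) (Fin 2) ℂ)
    (hρ : ρ.PosSemidef) :
    sSup {r : ℝ | ∃ β₀ β₁ : ℂ, ¬(β₀ = 0 ∧ β₁ = 0) ∧
        r = ‖((((Pz 1 * ρ * Pz 1 + Pz (-1) * ρ * Pz (-1)) - ρ)
              * (β₀ • (1 : Matrix (Fin 2) (Fin 2) ℂ) + β₁ • σθ θ)).trace)‖
            / opNorm (β₀ • (1 : Matrix (Fin 2) (Fin 2) ℂ) + β₁ • σθ θ)}
      = |Real.sin θ * ((ρ * σx).trace).re| := by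
  have hnum (β₀ β₁ : ℂ) : ‖(((Pz 1 * ρ * Pz 1 + Pz (-1) * ρ * Pz (-1)) - ρ)
      * (β₀ • (1 : Matrix (Fin 2) (Fin 2) ℂ) + β₁ • σθ θ)).trace‖
        = ‖β₁‖ * |Real.sin θ * ((ρ * σx).trace).re| := by
    rw [trace_luders_σz_sub_mul, norm_neg, norm_mul, norm_mul, Complex.norm_real,
      Real.norm_eq_abs, ← Complex.abs_re_eq_norm.2 (hρ.1.im_trace_mul isHermitian_σx), abs_mul,
      mul_assoc]
  refine IsGreatest.csSup_eq ⟨⟨0, 1, by simp, ?_⟩, ?_⟩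
  · rw [hnum, zero_smul, zero_add, one_smul, opNorm_eq_norm, norm_σθ, norm_one, one_mul, div_one]
  · rintro r ⟨β₀, β₁, -, rfl⟩
    rw [hnum, opNorm_eq_norm, mul_comm]
    refine div_le_of_le_mul₀ (norm_nonneg _) (abs_nonneg _) ?_
    gcongr
    exact norm_le_norm_smul_one_add_smul (σθ_mul_self θ) (one_add_σθ_ne_zero θ)
      (one_sub_σθ_ne_zero θ) β₀ β₁

/-- The maximum disturbance of `σ_θ`-observables by the Lüders measurement of `σ_z`
equals `|sin θ · ⟨σ_x⟩_ρ|`. -/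
theorem qubit_max_disturbance (θ : ℝ) (ρ : Matrix (Fin 2) (Fin 2) ℂ)
    (hρ : ρ.PosSemidef) (hρtr : ρ.trace = 1) :
    sSup {r : ℝ | ∃ β₀ β₁ : ℂ, ¬(β₀ = 0 ∧ β₁ = 0) ∧
        r = ‖((((Pz 1 * ρ * Pz 1 + Pz (-1) * ρ * Pz (-1)) - ρ)
              * (β₀ • (1 : Matrix (Fin 2) (Fin 2) ℂ) + β₁ • σθ θ)).trace)‖
            / opNorm (β₀ • (1 : Matrix (Fin 2) (Fin 2) ℂ) + β₁ • σθ θ)}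
      = |Real.sin θ * ((ρ * σx).trace).re| :=
  qubit_max_disturbance_general θ ρ hρ
end
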